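/- arXiv:1903.09678 — 4 statements merged into one kernel-verified Lean document; each statement's English description precedes it below -/
import Mathlib

section
/- Let t be real with |t| ≤ T where 0 < T < π/2. Then cos T ≤ cos t ≤ 1 − (1 − cos T)·t²/T². -/
open Real

lemma cos_envelope_aux (t T : ℝ) (hT0 : 0 < T) (hT : T < Real.pi / 2)
    (ht0 : 0 ≤ t) (ht : t ≤ T) :
    (1 - Real.cos T) * t ^ 2 ≤ (1 - Real.cos t) * T ^ 2 := by
  have hTpi : T / 2 ∈ Set.Icc (0:ℝ) π := ⟨by linarith, by nlinarith [pi_pos]⟩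
  have h0 : (0:ℝ) ∈ Set.Icc (0:ℝ) π := ⟨le_rfl, pi_pos.le⟩
  have ha : (0:ℝ) ≤ 1 - t / T := by
    rw [sub_nonneg]; exact div_le_one_of_le₀ ht hT0.le
  have hb : (0:ℝ) ≤ t / T := div_nonneg ht0 hT0.le
  have hab : (1 - t / T) + t / T = 1 := by ring
  have hconc := strictConcaveOn_sin_Icc.concaveOn.2 h0 hTpi ha hb hab
  simp only [smul_eq_mul, mul_zero, Real.sin_zero, zero_add] at hconc
  have hx : t / T * (T / 2) = t / 2 := by
    field_simp
  rw [hx] at hconc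
  -- hconc : t/T * sin (T/2) ≤ sin (t/2)
  have hsin_t : 0 ≤ Real.sin (t / 2) := by
    apply Real.sin_nonneg_of_nonneg_of_le_pi (by linarith)
    nlinarith [pi_pos]
  have hst : Real.sin (T / 2) * t ≤ Real.sin (t / 2) * T := by
    have := mul_le_mul_of_nonneg_right hconc hT0.le
    rw [div_mul_eq_mul_div, div_mul_eq_mul_div, mul_div_assoc,
      div_self hT0.ne'] at this
    linarith
  have hsT : 0 ≤ Real.sin (T / 2) := by
    apply Real.sin_nonneg_of_nonneg_of_le_pi (by linarith)
    nlinarith [pi_pos]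
  have hct : Real.cos t = 1 - 2 * Real.sin (t / 2) ^ 2 := by
    have := Real.cos_sq (t / 2)
    have h2 : 2 * (t / 2) = t := by ring
    rw [h2] at this
    nlinarith [Real.sin_sq_add_cos_sq (t / 2)]
  have hcT : Real.cos T = 1 - 2 * Real.sin (T / 2) ^ 2 := by
    have := Real.cos_sq (T / 2)
    have h2 : 2 * (T / 2) = T := by ring
    rw [h2] at this
    nlinarith [Real.sin_sq_add_cos_sq (T / 2)]
  rw [hct, hcT]
  nlinarith [mul_self_nonneg (Real.sin (T / 2) * t - Real.sin (t / 2) * T),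
    mul_le_mul hst hst (by positivity) (mul_nonneg hsin_t hT0.le)]

theorem cos_envelope (t T : ℝ) (hT0 : 0 < T) (hT : T < Real.pi / 2)
    (ht : |t| ≤ T) :
    Real.cos T ≤ Real.cos t ∧
    Real.cos t ≤ 1 - (1 - Real.cos T) * t ^ 2 / T ^ 2 := by
  have habs0 : (0:ℝ) ≤ |t| := abs_nonneg t
  have hcos : Real.cos t = Real.cos |t| := (Real.cos_abs t).symm
  constructor
  · rw [hcos]
    apply Real.cos_le_cos_of_nonneg_of_le_pi habs0 (by nlinarith [pi_pos]) ht
  · have h := cos_envelope_aux |t| T hT0 hT habs0 ht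
    rw [hcos]
    rw [← sq_abs t]
    have hT2 : (0:ℝ) < T ^ 2 := by positivity
    have h2 : (1 - Real.cos T) * |t| ^ 2 / T ^ 2 ≤ 1 - Real.cos |t| := by
      rw [div_le_iff₀ hT2]; nlinarith
    linarith
end

section
/- Let t be real with |t| ≤ T where 0 < T < π/2. Then |sin t − t·cos(T/2)| ≤ sin(T/2) − (T/2)·cos(T/2). -/
/-!
Put `s = T / 2` and `g x = sin x - x cos s`, so the claim is `|g t| ≤ g s`. Since `g` is odd it
suffices to take `t ∈ [0, T]`. On `[0, π]` the function `g` is concave with `g' s = 0`, so `g s` is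
its maximum there, and on `[0, T]` its minimum is `min (g 0) (g T) = min 0 (g T)`. Finally
`g T ≥ -g s` reads `3 s cos s ≤ 2 sin s cos s + sin s`, which is Huygens' inequality
`3 s ≤ 2 sin s + tan s` multiplied by `cos s`.
-/

open Real Set

theorem ConcaveOn.le_add_mul_sub_of_hasDerivAt {S : Set ℝ} {f : ℝ → ℝ} {f' x y : ℝ}
    (hf : ConcaveOn ℝ S f) (hx : x ∈ S) (hy : y ∈ S) (hf' : HasDerivAt f f' y) :
    f x ≤ f y + f' * (x - y) := by
  rcases lt_trichotomy x y with hxy | rfl | hxy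
  · have := hf.le_slope_of_hasDerivAt hx hy hxy hf'
    rw [slope_def_field, le_div_iff₀ (sub_pos.2 hxy)] at this
    linarith
  · simp
  · have := hf.slope_le_of_hasDerivAt hy hx hxy hf'
    rw [slope_def_field, div_le_iff₀ (sub_pos.2 hxy)] at this
    linarith

namespace Real

theorem sin_le_sin_add_cos_mul_sub {x y : ℝ} (hx : x ∈ Icc 0 π) (hy : y ∈ Icc 0 π) :
    sin x ≤ sin y + cos y * (x - y) :=
  strictConcaveOn_sin_Icc.concaveOn.le_add_mul_sub_of_hasDerivAt hx hy (hasDerivAt_sin y)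

theorem concaveOn_sin_sub_mul_Icc (c : ℝ) : ConcaveOn ℝ (Icc 0 π) (fun x ↦ sin x - x * c) :=
  strictConcaveOn_sin_Icc.concaveOn.sub ((LinearMap.mulRight ℝ c).convexOn (convex_Icc 0 π))

/-- Huygens' inequality. -/
theorem three_mul_le_two_mul_sin_add_tan {x : ℝ} (hx0 : 0 ≤ x) (hx : x < π / 2) :
    3 * x ≤ 2 * sin x + tan x := by
  have hcos : ∀ y ∈ Ico 0 (π / 2), 0 < cos y := fun y hy ↦
    cos_pos_of_mem_Ioo ⟨by linarith [pi_pos, hy.1], hy.2⟩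
  have hderiv : ∀ y ∈ Ico 0 (π / 2),
      HasDerivAt (fun y ↦ 2 * sin y + tan y - 3 * y) (2 * cos y + 1 / cos y ^ 2 - 3) y :=
    fun y hy ↦ (((hasDerivAt_sin y).const_mul 2).add
      (hasDerivAt_tan (hcos y hy).ne')).sub ((hasDerivAt_id y).const_mul 3) |>.congr_deriv (by ring)
  have hmono : MonotoneOn (fun y ↦ 2 * sin y + tan y - 3 * y) (Ico 0 (π / 2)) := by
    refine monotoneOn_of_deriv_nonneg (convex_Ico 0 (π / 2))
      (fun y hy ↦ (hderiv y hy).continuousAt.continuousWithinAt)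
      (fun y hy ↦ (hderiv y (interior_subset hy)).differentiableAt.differentiableWithinAt)
      fun y hy ↦ ?_
    have hy' := interior_subset hy
    have hc := hcos y hy'
    rw [(hderiv y hy').deriv]
    have : 2 * cos y + 1 / cos y ^ 2 - 3 = (1 - cos y) ^ 2 * (2 * cos y + 1) / cos y ^ 2 := by
      field_simp
      ring
    rw [this]
    positivity
  have := hmono ⟨le_rfl, by positivity⟩ ⟨hx0, hx⟩ hx0
  simp only [mul_zero, sin_zero, tan_zero, add_zero, sub_zero] at this
  linarith

end Real

theorem sin_band (t T : ℝ) (hT0 : 0 < T) (hT : T < Real.pi / 2)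
    (ht : |t| ≤ T) :
    |Real.sin t - t * Real.cos (T / 2)| ≤ Real.sin (T / 2) - (T / 2) * Real.cos (T / 2) := by
  set s := T / 2 with hs_def
  set g : ℝ → ℝ := fun x ↦ sin x - x * cos s
  have hs : s ∈ Icc 0 π := ⟨by positivity, by linarith [pi_pos]⟩
  have hT' : T ∈ Icc 0 π := ⟨hT0.le, by linarith [pi_pos]⟩
  have hmax : ∀ x ∈ Icc 0 π, g x ≤ g s := fun x hx ↦ by
    have := sin_le_sin_add_cos_mul_sub hx hs
    simp only [g]
    linarith
  have hgT : -g s ≤ g T := by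
    have hc : 0 < cos s := cos_pos_of_mem_Ioo ⟨by linarith [pi_pos], by linarith⟩
    have := mul_le_mul_of_nonneg_right (three_mul_le_two_mul_sin_add_tan hs.1 (by linarith)) hc.le
    rw [add_mul, tan_mul_cos hc.ne'] at this
    simp only [g]
    rw [show T = 2 * s by ring, sin_two_mul]
    linarith
  have hband : ∀ x ∈ Icc 0 T, |g x| ≤ g s := fun x hx ↦ by
    have hg0 : g 0 = 0 := by simp [g]
    have hmin : min 0 (g T) ≤ g x := hg0 ▸
      (concaveOn_sin_sub_mul_Icc (cos s)).min_le_of_mem_Icc ⟨le_rfl, pi_pos.le⟩ hT' hx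
    have hgs : 0 ≤ g s := hg0 ▸ hmax 0 ⟨le_rfl, pi_pos.le⟩
    exact abs_le.2 ⟨(le_min (by linarith) hgT).trans hmin, hmax x ⟨hx.1, hx.2.trans hT'.2⟩⟩
  have hodd : ∀ x, |g (-x)| = |g x| := fun x ↦ by
    rw [← abs_neg]
    simp only [g, sin_neg]
    ring_nf
  calc |g t| = |g (|t|)| := by rcases abs_choice t with h | h <;> simp only [h, hodd]
    _ ≤ g s := hband (|t|) ⟨abs_nonneg t, ht⟩
end

section
/- For any real t with |t| ≤ T and 0 < T < π/2, the upper cosine envelope satisfies 1 − (1 − cos T)·t²/T² ≥ cos t with equality if and only if t ∈ {−T, 0, T}. -/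
/-!
Since `1 - cos x = 2 sin² (x / 2)`, the ratio `(1 - cos x) / x²` equals `(sin (x/2) / (x/2))² / 2`,
which is strictly decreasing on `(0, 2π]` because `sin` is strictly concave on `[0, π]`.
Comparing it at `|t|` and `T` gives the inequality, strict unless `t = 0` or `|t| = T`.
-/

open Real Set

namespace Real

theorem sin_div_self_strictAntiOn : StrictAntiOn (fun x => sin x / x) (Ioc 0 π) := by
  intro a ha b hb hab
  have h := strictConcaveOn_sin_Icc.secant_strict_mono (a := 0) ⟨le_rfl, pi_pos.le⟩
    (Ioc_subset_Icc_self ha) (Ioc_subset_Icc_self hb) ha.1.ne' hb.1.ne' hab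
  simpa only [sin_zero, sub_zero] using h

theorem one_sub_cos_eq_two_mul_sin_half_sq (x : ℝ) : 1 - cos x = 2 * sin (x / 2) ^ 2 := by
  have hcos := cos_sq (x / 2)
  rw [mul_div_cancel₀ x two_ne_zero] at hcos
  linarith [sin_sq_add_cos_sq (x / 2)]

theorem one_sub_cos_div_sq (x : ℝ) :
    (1 - cos x) / x ^ 2 = (sin (x / 2) / (x / 2)) ^ 2 / 2 := by
  rw [one_sub_cos_eq_two_mul_sin_half_sq]
  ring

theorem one_sub_cos_div_sq_strictAntiOn :
    StrictAntiOn (fun x => (1 - cos x) / x ^ 2) (Ioc 0 (2 * π)) := by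
  intro a ha b hb hab
  have half_mem {x : ℝ} (hx : x ∈ Ioc 0 (2 * π)) : x / 2 ∈ Ioc 0 π :=
    ⟨half_pos hx.1, by linarith [hx.2]⟩
  have hb_nonneg : 0 ≤ sin (b / 2) / (b / 2) :=
    div_nonneg (sin_nonneg_of_nonneg_of_le_pi (half_mem hb).1.le (half_mem hb).2)
      (half_mem hb).1.le
  simp only [one_sub_cos_div_sq]
  gcongr ?_ ^ 2 / 2
  exact sin_div_self_strictAntiOn (half_mem ha) (half_mem hb) (by linarith)

end Real

theorem cos_upper_envelope_equality_general (t T : ℝ)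
    (hT : T < Real.pi / 2) (ht : |t| ≤ T) :
    Real.cos t ≤ 1 - (1 - Real.cos T) * t ^ 2 / T ^ 2 ∧
    (1 - (1 - Real.cos T) * t ^ 2 / T ^ 2 = Real.cos t ↔
      t = -T ∨ t = 0 ∨ t = T) := by
  rcases eq_or_ne t 0 with rfl | ht0
  · simp
  have hT0 : 0 < T := (abs_pos.2 ht0).trans_le ht
  rcases ht.eq_or_lt with habs | hlt
  · have heq : 1 - (1 - cos T) * t ^ 2 / T ^ 2 = cos t := by
      rw [← sq_abs, ← cos_abs t, habs, mul_div_cancel_right₀ _ (pow_ne_zero 2 hT0.ne')]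
      ring
    refine ⟨heq.ge, iff_of_true heq ?_⟩
    rcases (abs_eq hT0.le).1 habs with h | h <;> simp [h]
  · have hstrict : (1 - cos T) * t ^ 2 / T ^ 2 < 1 - cos t := by
      rw [mul_div_right_comm, ← lt_div_iff₀ (by positivity), ← sq_abs t, ← cos_abs t]
      exact one_sub_cos_div_sq_strictAntiOn ⟨abs_pos.2 ht0, by linarith [pi_pos]⟩
        ⟨hT0, by linarith [pi_pos]⟩ hlt
    refine ⟨by linarith, iff_of_false (by linarith) ?_⟩
    rintro (rfl | rfl | rfl) <;> simp_all [abs_of_pos hT0]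

theorem cos_upper_envelope_equality (t T : ℝ) (hT0 : 0 < T)
    (hT : T < Real.pi / 2) (ht : |t| ≤ T) :
    Real.cos t ≤ 1 - (1 - Real.cos T) * t ^ 2 / T ^ 2 ∧
    (1 - (1 - Real.cos T) * t ^ 2 / T ^ 2 = Real.cos t ↔
      t = -T ∨ t = 0 ∨ t = T) :=
  cos_upper_envelope_equality_general t T hT ht
end

section
/- For a positive semidefinite Hermitian 3×3 matrix M = [[1, conj(v_k), conj(v_m)], [v_k, V_{kk}, V_{km}], [v_m, conj(V_{km}), V_{mm}]], if additionally V_{kk} = |v_k|² and V_{mm} = |v_m|², then V_{km} = v_k·conj(v_m). -/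
/-!
If `A` is positive semidefinite with `A i i = 1` and `A j j = |A j i|²`, then for
`x = e_j - conj (A j i) • e_i` the quadratic form `x⋆ A x = A j j - |A j i|²` vanishes.
A vanishing quadratic form of a positive semidefinite matrix forces `A x = 0`, and the entries of
that vector equation say that row `j` of `A` is `A j i` times row `i`.
-/

open scoped ComplexOrder

namespace Matrix

variable {n 𝕜 : Type*} [Fintype n] [DecidableEq n] [RCLike 𝕜]

theorem PosSemidef.apply_eq_mul_apply_of_apply_eq_norm_sq {A : Matrix n n 𝕜} (hA : A.PosSemidef)
    {i j : n} (hii : A i i = 1) (hjj : A j j = ‖A j i‖ ^ 2) (l : n) :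
    A j l = A j i * A i l := by
  set x : n → 𝕜 := Pi.single j 1 - star (A j i) • Pi.single i 1
  have hAx : A *ᵥ x = A.col j - star (A j i) • A.col i := by
    simp only [x, mulVec_sub, mulVec_smul, mulVec_single_one]
  have hform : star x ⬝ᵥ A *ᵥ x = 0 := by
    rw [hAx]
    simp only [x, star_sub, star_smul, Pi.star_single, star_one, sub_dotProduct,
      smul_dotProduct, single_dotProduct, one_mul, Pi.sub_apply, Pi.smul_apply, col_apply,
      smul_eq_mul, hii, ← hA.isHermitian.apply i j, hjj, ← RCLike.conj_mul, RCLike.star_def]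
    ring
  have hcol := congrFun ((hA.dotProduct_mulVec_zero_iff x).mp hform) l
  simp only [hAx, Pi.sub_apply, Pi.smul_apply, col_apply, smul_eq_mul, Pi.zero_apply,
    sub_eq_zero] at hcol
  calc A j l = star (A l j) := (hA.isHermitian.apply j l).symm
    _ = A j i * A i l := by rw [hcol, star_mul, star_star, hA.isHermitian.apply, mul_comm]

end Matrix

theorem tcr_exact_when_diag_tight_general (vk vm Vkm : ℂ) (Vkk Vmm : ℝ)
    (h : (!![(1 : ℂ), star vk, star vm;
             vk, (Vkk : ℂ), Vkm;
             vm, star Vkm, (Vmm : ℂ)]).PosSemidef)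
    (hkk : Vkk = ‖vk‖ ^ 2) :
    Vkm = vk * star vm := by
  subst hkk
  simpa using h.apply_eq_mul_apply_of_apply_eq_norm_sq (i := 0) (j := 1) rfl (by simp) 2

theorem tcr_exact_when_diag_tight (vk vm Vkm : ℂ) (Vkk Vmm : ℝ)
    (h : (!![(1 : ℂ), star vk, star vm;
             vk, (Vkk : ℂ), Vkm;
             vm, star Vkm, (Vmm : ℂ)]).PosSemidef)
    (hkk : Vkk = ‖vk‖ ^ 2) (hmm : Vmm = ‖vm‖ ^ 2) :
    Vkm = vk * star vm :=
  tcr_exact_when_diag_tight_general vk vm Vkm Vkk Vmm h hkk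
end
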